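/- arXiv:2009.12008 — 3 statements merged into one kernel-verified Lean document; each statement's English description precedes it below -/
import Mathlib

section
/- (Expander mixing lemma, spectral form.) Let (G,W) be a d-regular matrix-weighted graph on n vertices with k×k weight matrices, with adjacency eigenvalues d = μ_1 = … = μ_k ≥ μ_{k+1} ≥ … ≥ μ_{nk}. Then for all vertex subsets S and T, every eigenvalue of the symmetric k×k matrix E(S,T) − (d·|S|·|T|/n)·I_k has magnitude at most max(|μ_{k+1}|, |μ_{kn}|) · √( |S|·|T|·(1 − |S|/n)·(1 − |T|/n) ). -/
open Matrix Finset

noncomputable section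

/-- The adjacency matrix of a matrix-weighted graph: the `kn × kn` block matrix
whose `(u,v)` block is the weight matrix `W u v`. -/
def mwAdj (n k : ℕ) (W : Fin n → Fin n → Matrix (Fin k) (Fin k) ℝ) :
    Matrix (Fin n × Fin k) (Fin n × Fin k) ℝ :=
  fun p q => W p.1 q.1 p.2 q.2

/-- The degree matrix of a matrix-weighted graph: block diagonal, with
`(v,v)` block `D_v = ∑ u, W u v`. -/
def mwDeg (n k : ℕ) (W : Fin n → Fin n → Matrix (Fin k) (Fin k) ℝ) :
    Matrix (Fin n × Fin k) (Fin n × Fin k) ℝ :=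
  fun p q => if p.1 = q.1 then (∑ u, W u p.1) p.2 q.2 else 0

/-- The Laplacian `L = D - A` of a matrix-weighted graph. -/
def mwLap (n k : ℕ) (W : Fin n → Fin n → Matrix (Fin k) (Fin k) ℝ) :
    Matrix (Fin n × Fin k) (Fin n × Fin k) ℝ :=
  mwDeg n k W - mwAdj n k W

/-- The matrix-weighted edge count between vertex subsets `S` and `T`:
`E(S,T) = ∑_{s ∈ S, t ∈ T} W s t`, a `k × k` matrix. -/
def mwEdge (n k : ℕ) (W : Fin n → Fin n → Matrix (Fin k) (Fin k) ℝ)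
    (S T : Finset (Fin n)) : Matrix (Fin k) (Fin k) ℝ :=
  ∑ s ∈ S, ∑ t ∈ T, W s t

/-!
Let `w` be an eigenvector of `E(S,T) - (d|S||T|/n) I` for the eigenvalue `x`, and put
`f = (1_S - |S|/n) ⊗ w`, `g = (1_T - |T|/n) ⊗ w`. Regularity of the weights on both sides turns
`⟪f, A g⟫` into `⟪w, (E(S,T) - (d|S||T|/n) I) w⟫ = x ‖w‖²`, while
`‖f‖² = |S| (1 - |S|/n) ‖w‖²` and `‖g‖² = |T| (1 - |T|/n) ‖w‖²`.

The centring makes `f` orthogonal to the block-constant vectors `1 ⊗ u`, which are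
`d`-eigenvectors of `A`. If `μ_{k+1} < d`, the `k` orthogonal vectors `1 ⊗ e_j` span the
`k`-dimensional top eigenspace, so `f` has no component there; otherwise `d` itself lies in
`[μ_{kn}, μ_{k+1}]`. Either way every eigencomponent of `f` that survives carries an eigenvalue
of absolute value at most `max(|μ_{k+1}|, |μ_{kn}|)`, and Cauchy–Schwarz in the eigenbasis bounds
`|⟪f, A g⟫|` by that constant times `‖f‖ ‖g‖`.
-/

namespace Matrix

theorem apply_eq_zero_of_orthogonal_family {ι κ K : Type*} [Fintype ι] [Fintype κ]
    [DecidableEq κ] [Field K] {ρ : κ → ι} (hρ : Function.Injective ρ) {C : κ → ι → K} {r : K}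
    (hr : r ≠ 0) (hC : ∀ j l, C j ⬝ᵥ C l = if j = l then r else 0)
    (hsupp : ∀ j, ∀ i ∉ Set.range ρ, C j i = 0) {X : ι → K} (hX : ∀ j, C j ⬝ᵥ X = 0)
    (l : κ) : X (ρ l) = 0 := by
  set M : Matrix κ κ K := of fun j l => C j (ρ l)
  have hrestrict : ∀ j v, C j ⬝ᵥ v = (M *ᵥ (v ∘ ρ)) j := fun j v =>
    (Fintype.sum_of_injective ρ hρ _ _ (fun i hi => by simp [hsupp j i hi]) fun _ => rfl).symm
  have hMM : M * Mᵀ = r • 1 := by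
    ext j l
    rw [mul_apply, smul_apply, one_apply, smul_ite, smul_eq_mul, mul_one, smul_zero, ← hC,
      hrestrict]
    rfl
  have hdet : M.det ≠ 0 := by
    have h := congrArg det hMM
    rw [det_mul, det_transpose, det_smul, det_one, mul_one] at h
    exact fun h0 => pow_ne_zero _ hr (by rw [← h, h0, mul_zero])
  by_contra hl
  refine hdet (exists_mulVec_eq_zero_iff.mp ⟨X ∘ ρ, fun h0 => hl (congrFun h0 l), ?_⟩)
  exact funext fun j => (hrestrict j X).symm.trans (hX j)

variable {ι K : Type*} [Fintype ι] [DecidableEq ι]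

theorem exists_mulVec_eq_smul_of_mem_spectrum [Field K] {M : Matrix ι ι K} {x : K}
    (hx : x ∈ spectrum K M) : ∃ w ≠ 0, M *ᵥ w = x • w := by
  rw [← spectrum_toLin', ← Module.End.hasEigenvalue_iff_mem_spectrum] at hx
  obtain ⟨w, hw⟩ := hx.exists_hasEigenvector
  exact ⟨w, hw.2, by simpa using hw.apply_eq_smul⟩

theorem transpose_mulVec_dotProduct_transpose_mulVec [CommSemiring K] {U : Matrix ι ι K}
    (hU : U * Uᵀ = 1) (x y : ι → K) : (Uᵀ *ᵥ x) ⬝ᵥ (Uᵀ *ᵥ y) = x ⬝ᵥ y := by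
  rw [mulVec_transpose, ← dotProduct_mulVec, mulVec_mulVec, hU, one_mulVec]

theorem dotProduct_mulVec_eq_sum_of_eq_mul_diagonal [CommSemiring K] {A U : Matrix ι ι K}
    {μ : ι → K} (hA : A = U * diagonal μ * Uᵀ) (x y : ι → K) :
    x ⬝ᵥ (A *ᵥ y) = ∑ i, μ i * ((Uᵀ *ᵥ x) i * (Uᵀ *ᵥ y) i) := by
  rw [hA, ← mulVec_mulVec, ← mulVec_mulVec, dotProduct_mulVec, ← mulVec_transpose, dotProduct]
  simp only [mulVec_diagonal]
  exact sum_congr rfl fun i _ => by ring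

theorem transpose_mulVec_apply_eq_zero_of_mulVec_eq_smul [Field K] {A U : Matrix ι ι K}
    {μ : ι → K} (hU : U * Uᵀ = 1) (hA : A = U * diagonal μ * Uᵀ) {d : K} {c : ι → K}
    (hc : A *ᵥ c = d • c) {i : ι} (hi : μ i ≠ d) : (Uᵀ *ᵥ c) i = 0 := by
  have hUtU : Uᵀ * U = 1 := mul_eq_one_comm.mp hU
  have h : diagonal μ *ᵥ (Uᵀ *ᵥ c) = d • (Uᵀ *ᵥ c) := by
    rw [← mulVec_smul, ← hc, hA, mulVec_mulVec, mulVec_mulVec, ← Matrix.mul_assoc,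
      ← Matrix.mul_assoc, hUtU, Matrix.one_mul]
  have hi' := congrFun h i
  rw [mulVec_diagonal, Pi.smul_apply, smul_eq_mul] at hi'
  exact (mul_eq_mul_right_iff.mp hi').resolve_left hi

theorem abs_dotProduct_mulVec_le_of_eq_mul_diagonal {A U : Matrix ι ι ℝ} {μ : ι → ℝ}
    (hU : U * Uᵀ = 1) (hA : A = U * diagonal μ * Uᵀ) {L : ℝ} (hL : 0 ≤ L) {x : ι → ℝ}
    (hx : ∀ i, (Uᵀ *ᵥ x) i = 0 ∨ |μ i| ≤ L) (y : ι → ℝ) :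
    |x ⬝ᵥ (A *ᵥ y)| ≤ L * √((x ⬝ᵥ x) * (y ⬝ᵥ y)) := by
  set X := Uᵀ *ᵥ x
  set Y := Uᵀ *ᵥ y
  have hterm : ∀ i, |μ i * (X i * Y i)| ≤ L * (|X i| * |Y i|) := fun i => by
    rcases hx i with h | h
    · simp [h]
    · rw [abs_mul, abs_mul]; gcongr
  have hCS : ∑ i, |X i| * |Y i| ≤ √((X ⬝ᵥ X) * (Y ⬝ᵥ Y)) := by
    refine Real.le_sqrt_of_sq_le ?_
    simpa [dotProduct, sq_abs, sq] using
      sum_mul_sq_le_sq_mul_sq univ (fun i => |X i|) (fun i => |Y i|)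
  rw [transpose_mulVec_dotProduct_transpose_mulVec hU,
    transpose_mulVec_dotProduct_transpose_mulVec hU] at hCS
  calc |x ⬝ᵥ (A *ᵥ y)| = |∑ i, μ i * (X i * Y i)| := by
        rw [dotProduct_mulVec_eq_sum_of_eq_mul_diagonal hA]
    _ ≤ ∑ i, L * (|X i| * |Y i|) :=
        (abs_sum_le_sum_abs _ _).trans (sum_le_sum fun i _ => hterm i)
    _ ≤ L * √((x ⬝ᵥ x) * (y ⬝ᵥ y)) := by rw [← mul_sum]; gcongr

end Matrix

def tensorVec {α β R : Type*} [Mul R] (a : α → R) (w : β → R) : α × β → R :=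
  fun p => a p.1 * w p.2

theorem tensorVec_dotProduct_tensorVec {α β R : Type*} [Fintype α] [Fintype β]
    [CommSemiring R] (a b : α → R) (w w' : β → R) :
    tensorVec a w ⬝ᵥ tensorVec b w' = (a ⬝ᵥ b) * (w ⬝ᵥ w') := by
  simp only [tensorVec, dotProduct, Fintype.sum_prod_type, sum_mul_sum]
  exact sum_congr rfl fun _ _ => sum_congr rfl fun _ _ => by ring

def centeredIndicator {α : Type*} [Fintype α] [DecidableEq α] (S : Finset α) : α → ℝ :=
  fun v => (if v ∈ S then 1 else 0) - #S / Fintype.card α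

section CenteredIndicator

variable {α : Type*} [Fintype α] [DecidableEq α] (S : Finset α)

theorem sum_centeredIndicator : ∑ v, centeredIndicator S v = 0 := by
  rcases isEmpty_or_nonempty α with hα | hα
  · simp
  simp [centeredIndicator, sum_sub_distrib, sum_ite_mem, mul_div_cancel₀ _ (NeZero.ne _)]

theorem centeredIndicator_dotProduct_self :
    centeredIndicator S ⬝ᵥ centeredIndicator S = #S * (1 - #S / Fintype.card α) := by
  rcases isEmpty_or_nonempty α with hα | hα
  · simp [Subsingleton.elim S ∅]
  have hsq : ∀ v, centeredIndicator S v * centeredIndicator S v =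
      (if v ∈ S then 1 else 0) * (1 - 2 * (#S / Fintype.card α)) +
        (#S / Fintype.card α) ^ 2 := by
    intro v
    by_cases hv : v ∈ S <;> simp [centeredIndicator, hv] <;> ring
  simp only [dotProduct, hsq, sum_add_distrib, ← sum_mul, sum_ite_mem, univ_inter, sum_const,
    card_univ, nsmul_eq_mul]
  field_simp
  ring

theorem sum_centeredIndicator_smul {M : Type*} [AddCommGroup M] [Module ℝ M] (f : α → M) :
    ∑ v, centeredIndicator S v • f v = ∑ v ∈ S, f v - (#S / Fintype.card α : ℝ) • ∑ v, f v := by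
  simp only [centeredIndicator, sub_smul, sum_sub_distrib, ite_smul, one_smul, zero_smul,
    sum_ite_mem, univ_inter, smul_sum]

end CenteredIndicator

section SpectralBound

variable {n k : ℕ} {d : ℝ} {A U : Matrix (Fin n × Fin k) (Fin n × Fin k) ℝ} {mu : ℕ → ℝ}

-- `finProdFinEquiv (v, i) = i + k * v`, so the top `k` eigenvalues sit at the indices `(0, i)`.
theorem transpose_mulVec_top_eq_zero_of_orthogonal_const (hn : 0 < n)
    (hmu : AntitoneOn mu (Set.Iio (n * k))) (hkd : mu k < d) (hU : U * Uᵀ = 1)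
    (hAU : A = U * diagonal (fun p => mu (finProdFinEquiv p)) * Uᵀ)
    (hconst : ∀ u, A *ᵥ tensorVec 1 u = d • tensorVec 1 u) {x : Fin n × Fin k → ℝ}
    (hx : ∀ u, x ⬝ᵥ tensorVec 1 u = 0) (i : Fin k) : (Uᵀ *ᵥ x) (⟨0, hn⟩, i) = 0 := by
  refine apply_eq_zero_of_orthogonal_family (Prod.mk_right_injective _) (r := n)
    (C := fun j => Uᵀ *ᵥ tensorVec 1 (Pi.single j 1)) (by positivity) (fun j l => ?_)
    (fun j p hp => ?_) (fun j => ?_) i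
  · rw [transpose_mulVec_dotProduct_transpose_mulVec hU, tensorVec_dotProduct_tensorVec]
    simp [Pi.single_apply, eq_comm]
  · have hp1 : p.1 ≠ ⟨0, hn⟩ := fun h => hp ⟨p.2, by rw [← h]⟩
    have hkp : k ≤ (finProdFinEquiv p : ℕ) := by
      simp only [finProdFinEquiv_apply_val]
      have : 1 ≤ (p.1 : ℕ) := Nat.one_le_iff_ne_zero.mpr fun h => hp1 (Fin.ext h)
      nlinarith
    refine transpose_mulVec_apply_eq_zero_of_mulVec_eq_smul hU hAU (hconst _) (ne_of_lt ?_)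
    have hp := (finProdFinEquiv p).isLt
    exact (hmu (hkp.trans_lt hp) hp hkp).trans_lt hkd
  · rw [transpose_mulVec_dotProduct_transpose_mulVec hU, dotProduct_comm, hx]

theorem abs_dotProduct_mulVec_le_of_orthogonal_const (hn : 2 ≤ n) (hk : 0 < k)
    (hmu : AntitoneOn mu (Set.Iio (n * k))) (htop : ∀ i < k, mu i = d) (hU : U * Uᵀ = 1)
    (hAU : A = U * diagonal (fun p => mu (finProdFinEquiv p)) * Uᵀ)
    (hconst : ∀ u, A *ᵥ tensorVec 1 u = d • tensorVec 1 u) {x : Fin n × Fin k → ℝ}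
    (hx : ∀ u, x ⬝ᵥ tensorVec 1 u = 0) (y : Fin n × Fin k → ℝ) :
    |x ⬝ᵥ (A *ᵥ y)| ≤ max |mu k| |mu (n * k - 1)| * √((x ⬝ᵥ x) * (y ⬝ᵥ y)) := by
  have hkn : k < n * k := by nlinarith
  refine abs_dotProduct_mulVec_le_of_eq_mul_diagonal hU hAU (by positivity) (fun p => ?_) y
  have hp := (finProdFinEquiv p).isLt
  have hbelow : mu (n * k - 1) ≤ mu (finProdFinEquiv p) :=
    hmu hp (show n * k - 1 < n * k by omega) (by omega)
  rw [max_comm]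
  by_cases hkp : k ≤ (finProdFinEquiv p : ℕ)
  · exact .inr (abs_le_max_abs_abs hbelow (hmu hkn hp hkp))
  rw [htop (finProdFinEquiv p) (by omega)] at hbelow ⊢
  rcases le_or_gt d (mu k) with hd | hd
  · exact .inr (abs_le_max_abs_abs hbelow hd)
  · simp only [finProdFinEquiv_apply_val, not_le] at hkp
    have hp1 : p = (⟨0, by omega⟩, p.2) := Prod.ext (Fin.ext (by simp only; nlinarith)) rfl
    exact .inl (hp1 ▸
      transpose_mulVec_top_eq_zero_of_orthogonal_const (by omega) hmu hd hU hAU hconst hx _)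

end SpectralBound

section MatrixWeighted

variable {n k : ℕ} {W : Fin n → Fin n → Matrix (Fin k) (Fin k) ℝ}

theorem mwAdj_mulVec_tensorVec (b : Fin n → ℝ) (w : Fin k → ℝ) (p : Fin n × Fin k) :
    (mwAdj n k W *ᵥ tensorVec b w) p = ((∑ v, b v • W p.1 v) *ᵥ w) p.2 := by
  simp only [mulVec, dotProduct, mwAdj, tensorVec, Fintype.sum_prod_type, Matrix.sum_apply,
    Matrix.smul_apply, smul_eq_mul, sum_mul]
  rw [sum_comm]
  exact sum_congr rfl fun _ _ => sum_congr rfl fun _ _ => by ring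

theorem tensorVec_dotProduct_mwAdj_mulVec (a b : Fin n → ℝ) (w w' : Fin k → ℝ) :
    tensorVec a w ⬝ᵥ (mwAdj n k W *ᵥ tensorVec b w') =
      w ⬝ᵥ ((∑ u, a u • ∑ v, b v • W u v) *ᵥ w') := by
  simp only [dotProduct, Fintype.sum_prod_type, mwAdj_mulVec_tensorVec, tensorVec, sum_mulVec,
    smul_mulVec, Finset.sum_apply, Pi.smul_apply, smul_eq_mul, mul_sum]
  rw [sum_comm]
  exact sum_congr rfl fun _ _ => sum_congr rfl fun _ _ => sum_congr rfl fun _ _ => by ring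

theorem mwAdj_mulVec_tensorVec_one {d : ℝ} (hrow : ∀ u, ∑ v, W u v = d • 1) (w : Fin k → ℝ) :
    mwAdj n k W *ᵥ tensorVec 1 w = d • tensorVec 1 w := by
  ext p
  simp [mwAdj_mulVec_tensorVec, hrow, tensorVec, smul_mulVec]

theorem sum_centeredIndicator_smul_sum_centeredIndicator_smul {d : ℝ}
    (hrow : ∀ u, ∑ v, W u v = d • 1) (hcol : ∀ v, ∑ u, W u v = d • 1) (S T : Finset (Fin n)) :
    ∑ u, centeredIndicator S u • ∑ v, centeredIndicator T v • W u v =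
      mwEdge n k W S T - (d * #S * #T / n) • 1 := by
  have hcols : ∑ u, ∑ v, centeredIndicator T v • W u v = 0 := by
    rw [sum_comm]
    simp only [← smul_sum, hcol, ← sum_smul, sum_centeredIndicator, zero_smul]
  rw [sum_centeredIndicator_smul S, hcols, smul_zero, sub_zero]
  simp only [sum_centeredIndicator_smul T, hrow, sum_sub_distrib, sum_const, Fintype.card_fin,
    ← Nat.cast_smul_eq_nsmul ℝ, smul_smul, mwEdge]
  congr 2
  ring

end MatrixWeighted

/-- `mu` lists the adjacency eigenvalues in decreasing order and is 0-indexed, so `mu k` and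
`mu (n * k - 1)` are the paper's `μ_{k+1}` and `μ_{kn}`. -/
theorem matrix_weighted_expander_mixing_spectral_general
    (n k : ℕ) (hn : 2 ≤ n) (hk : 0 < k) (d : ℝ)
    (W : Fin n → Fin n → Matrix (Fin k) (Fin k) ℝ)
    (hsym : ∀ u v, W u v = W v u)
    (hreg : ∀ v : Fin n, ∑ u, W u v = d • (1 : Matrix (Fin k) (Fin k) ℝ))
    (mu : ℕ → ℝ) (hmu : AntitoneOn mu (Set.Iio (n * k)))
    (htop : ∀ i < k, mu i = d)
    (U : Matrix (Fin n × Fin k) (Fin n × Fin k) ℝ) (hU : U * Uᵀ = 1)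
    (hAW : mwAdj n k W =
      U * Matrix.diagonal (fun p => mu (finProdFinEquiv p)) * Uᵀ)
    (S T : Finset (Fin n)) :
    ∀ x ∈ spectrum ℝ
        (mwEdge n k W S T -
          (d * S.card * T.card / n) • (1 : Matrix (Fin k) (Fin k) ℝ)),
      |x| ≤ max |mu k| |mu (n * k - 1)| *
        Real.sqrt ((S.card : ℝ) * T.card * (1 - S.card / n) * (1 - T.card / n)) := by
  intro x hx
  obtain ⟨w, hw0, hw⟩ := exists_mulVec_eq_smul_of_mem_spectrum hx
  have hQ : 0 < w ⬝ᵥ w := by simpa using dotProduct_self_star_pos_iff.mpr hw0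
  have hrow : ∀ u, ∑ v, W u v = d • 1 := fun u => by simpa only [hsym u] using hreg u
  have hquad : tensorVec (centeredIndicator S) w ⬝ᵥ
      (mwAdj n k W *ᵥ tensorVec (centeredIndicator T) w) = x * (w ⬝ᵥ w) := by
    rw [tensorVec_dotProduct_mwAdj_mulVec,
      sum_centeredIndicator_smul_sum_centeredIndicator_smul hrow hreg, hw, dotProduct_smul,
      smul_eq_mul]
  have horth : ∀ u, tensorVec (centeredIndicator S) w ⬝ᵥ tensorVec 1 u = 0 := fun u => by
    rw [tensorVec_dotProduct_tensorVec, dotProduct_one, sum_centeredIndicator, zero_mul]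
  have hbound := abs_dotProduct_mulVec_le_of_orthogonal_const hn hk hmu htop hU hAW
    (mwAdj_mulVec_tensorVec_one hrow) horth (tensorVec (centeredIndicator T) w)
  rw [hquad, tensorVec_dotProduct_tensorVec, tensorVec_dotProduct_tensorVec,
    centeredIndicator_dotProduct_self, centeredIndicator_dotProduct_self, Fintype.card_fin,
    abs_mul, abs_of_pos hQ,
    show ∀ s t p q Q : ℝ, s * p * Q * (t * q * Q) = s * t * p * q * (Q * Q) from
      fun _ _ _ _ _ => by ring,
    Real.sqrt_mul' _ (mul_self_nonneg _), Real.sqrt_mul_self hQ.le, ← mul_assoc] at hbound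
  exact le_of_mul_le_mul_right hbound hQ

/-- Expander mixing lemma for `d`-regular matrix-weighted graphs, spectral form:
every eigenvalue of `E(S,T) - (d|S||T|/n) I_k` has magnitude at most
`max(|μ_{k+1}|, |μ_{kn}|) √(|S||T|(1-|S|/n)(1-|T|/n))`, where `mu` enumerates the
adjacency eigenvalues in decreasing order (0-indexed), with `μ_1 = ⋯ = μ_k = d`,
witnessed by an orthogonal spectral decomposition. -/
theorem matrix_weighted_expander_mixing_spectral
    (n k : ℕ) (hn : 2 ≤ n) (hk : 0 < k) (d : ℝ) (G : SimpleGraph (Fin n))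
    (W : Fin n → Fin n → Matrix (Fin k) (Fin k) ℝ)
    (hpsd : ∀ u v, (W u v).PosSemidef)
    (hsym : ∀ u v, W u v = W v u)
    (h0 : ∀ u v, ¬ G.Adj u v → W u v = 0)
    (hreg : ∀ v : Fin n, ∑ u, W u v = d • (1 : Matrix (Fin k) (Fin k) ℝ))
    (mu : ℕ → ℝ) (hmu : AntitoneOn mu (Set.Iio (n * k)))
    (htop : ∀ i < k, mu i = d)
    (U : Matrix (Fin n × Fin k) (Fin n × Fin k) ℝ) (hU : U * Uᵀ = 1)
    (hAW : mwAdj n k W =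
      U * Matrix.diagonal (fun p => mu (finProdFinEquiv p)) * Uᵀ)
    (S T : Finset (Fin n)) :
    ∀ x ∈ spectrum ℝ
        (mwEdge n k W S T -
          (d * S.card * T.card / n) • (1 : Matrix (Fin k) (Fin k) ℝ)),
      |x| ≤ max |mu k| |mu (n * k - 1)| *
        Real.sqrt ((S.card : ℝ) * T.card * (1 - S.card / n) * (1 - T.card / n)) :=
  matrix_weighted_expander_mixing_spectral_general n k hn hk d W hsym hreg mu hmu htop U hU hAW S T
end
end

section
/- Let (G,W) be a matrix-weighted graph with invertible degree matrix D, and let Ã = D^{−1/2} A D^{−1/2}. Let ψ be the kn×k block matrix whose block at vertex v is D_v^{1/2}, let ψ_S be ψ with all blocks at vertices outside S set to zero, and let ψ_S^⊥ = ψ_S − ψ·vol(V)^{−1}·vol(S), and similarly for T. Then E(S,T) − vol(S)·vol(V)^{−1}·vol(T) = (ψ_S^⊥)ᵀ Ã ψ_T^⊥. -/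
open Matrix Finset

noncomputable section

/-- The matrix-weighted volume of a vertex subset `S`: `vol(S) = ∑_{s ∈ S} D_s`,
a `k × k` matrix, where `D_s = ∑ u, W u s` is the degree matrix of `s`. -/
def mwVol (n k : ℕ) (W : Fin n → Fin n → Matrix (Fin k) (Fin k) ℝ)
    (S : Finset (Fin n)) : Matrix (Fin k) (Fin k) ℝ :=
  ∑ s ∈ S, ∑ u, W u s

/-- The `kn × k` block matrix `ψ` whose block at vertex `v` is `Q v`
(in applications, `Q v = D_v^{1/2}`). -/
def mwPsi (n k : ℕ) (Q : Fin n → Matrix (Fin k) (Fin k) ℝ) :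
    Matrix (Fin n × Fin k) (Fin k) ℝ :=
  fun p j => Q p.1 p.2 j

/-- `ψ_S`: the matrix `ψ` with all blocks at vertices outside `S` set to zero. -/
def mwPsiS (n k : ℕ) (Q : Fin n → Matrix (Fin k) (Fin k) ℝ)
    (S : Finset (Fin n)) : Matrix (Fin n × Fin k) (Fin k) ℝ :=
  fun p j => if p.1 ∈ S then Q p.1 p.2 j else 0

/-- The `kn × kn` block diagonal matrix with diagonal blocks `Q v`
(in applications, this is `D^{1/2}`). -/
def mwBlockDiag (n k : ℕ) (Q : Fin n → Matrix (Fin k) (Fin k) ℝ) :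
    Matrix (Fin n × Fin k) (Fin n × Fin k) ℝ :=
  fun p q => if p.1 = q.1 then Q p.1 p.2 q.2 else 0

/-! With `B = D^{1/2}` and `J_X = mwPsiS n k 1 X` the block indicator of `X`, we have
`ψ_X = B J_X`, and the symmetric invertible `B` cancels against `Ã = B⁻¹ A B⁻¹`. What remains is
`(J_S - J_V vol(V)⁻¹ vol(S))ᵀ A (J_T - J_V vol(V)⁻¹ vol(T))`; since `J_Xᵀ A J_Y = E(X,Y)`,
`E(S,V) = vol(S)` and `E(V,T) = vol(T)`, expanding it gives `E(S,T) - vol(S) vol(V)⁻¹ vol(T)`.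
The expansion only needs `vol(V)⁻¹ vol(V) vol(V)⁻¹ = vol(V)⁻¹`, which holds even for singular
`vol(V)` because `Matrix`'s inverse is then `0`. -/

namespace Matrix

variable {m k R : Type*} [Fintype m] [CommRing R]

theorem nonsing_inv_mul_mul_nonsing_inv_self [Fintype k] [DecidableEq k] (V : Matrix k k R) :
    V⁻¹ * V * V⁻¹ = V⁻¹ := by
  by_cases hV : IsUnit V.det
  · rw [nonsing_inv_mul _ hV, Matrix.one_mul]
  · simp [nonsing_inv_apply_not_isUnit _ hV]

theorem transpose_sub_mul_mul_sub [Fintype k] [DecidableEq k] (A : Matrix m m R)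
    (x y u : Matrix m k R) (a b V : Matrix k k R)
    (hxu : xᵀ * A * u = a) (huy : uᵀ * A * y = b) (huu : uᵀ * A * u = V)
    (ha : aᵀ = a) (hV : Vᵀ = V) :
    (x - u * V⁻¹ * a)ᵀ * A * (y - u * V⁻¹ * b) = xᵀ * A * y - a * V⁻¹ * b := by
  have hVinv : V⁻¹ᵀ = V⁻¹ := by rw [transpose_nonsing_inv, hV]
  calc (x - u * V⁻¹ * a)ᵀ * A * (y - u * V⁻¹ * b)
      = xᵀ * A * y - a * V⁻¹ * (uᵀ * A * y) - (xᵀ * A * u) * V⁻¹ * b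
          + a * (V⁻¹ * (uᵀ * A * u) * V⁻¹) * b := by
        simp only [transpose_sub, transpose_mul, ha, hVinv, Matrix.sub_mul, Matrix.mul_sub,
          Matrix.mul_assoc]
        abel
    _ = xᵀ * A * y - a * V⁻¹ * b := by
        rw [hxu, huy, huu, nonsing_inv_mul_mul_nonsing_inv_self]
        abel

theorem transpose_mul_mul_mul_of_transpose_eq [DecidableEq m] (A B : Matrix m m R)
    (x y : Matrix m k R) (hB : Bᵀ = B) (hdet : IsUnit B.det) :
    (B * x)ᵀ * (B⁻¹ * A * B⁻¹) * (B * y) = xᵀ * A * y := by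
  rw [transpose_mul, hB]
  simp only [Matrix.mul_assoc, nonsing_inv_mul_cancel_left _ _ hdet]
  rw [← Matrix.mul_assoc B, mul_nonsing_inv _ hdet, Matrix.one_mul]

end Matrix

section

variable {n k : ℕ}

theorem mwBlockDiag_mul_mwBlockDiag (P Q : Fin n → Matrix (Fin k) (Fin k) ℝ) :
    mwBlockDiag n k P * mwBlockDiag n k Q = mwBlockDiag n k (fun v => P v * Q v) := by
  ext ⟨v, i⟩ ⟨w, j⟩
  simp only [mul_apply, mwBlockDiag, Fintype.sum_prod_type, ite_mul, zero_mul, mul_ite, mul_zero]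
  by_cases h : v = w
  · subst h; simp
  · simp [h]

theorem mwBlockDiag_mul_mwPsiS (P Q : Fin n → Matrix (Fin k) (Fin k) ℝ) (S : Finset (Fin n)) :
    mwBlockDiag n k P * mwPsiS n k Q S = mwPsiS n k (fun v => P v * Q v) S := by
  ext ⟨v, i⟩ j
  by_cases h : v ∈ S <;> simp [mul_apply, mwBlockDiag, mwPsiS, Fintype.sum_prod_type, h]

theorem transpose_mwBlockDiag (Q : Fin n → Matrix (Fin k) (Fin k) ℝ) :
    (mwBlockDiag n k Q)ᵀ = mwBlockDiag n k (fun v => (Q v)ᵀ) := by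
  ext ⟨v, i⟩ ⟨w, j⟩
  by_cases h : v = w
  · subst h; simp [mwBlockDiag]
  · simp [mwBlockDiag, h, Ne.symm h]

theorem mwDeg_eq_mwBlockDiag (W : Fin n → Fin n → Matrix (Fin k) (Fin k) ℝ) :
    mwDeg n k W = mwBlockDiag n k (fun v => ∑ u, W u v) := rfl

theorem mwPsi_eq_mwPsiS_univ (Q : Fin n → Matrix (Fin k) (Fin k) ℝ) :
    mwPsi n k Q = mwPsiS n k Q univ := by
  ext p j; simp [mwPsi, mwPsiS]

theorem transpose_mwPsiS_one_mul_mwAdj_mul (W : Fin n → Fin n → Matrix (Fin k) (Fin k) ℝ)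
    (S T : Finset (Fin n)) :
    (mwPsiS n k 1 S)ᵀ * mwAdj n k W * mwPsiS n k 1 T = mwEdge n k W S T := by
  ext i j
  simp only [mul_apply, transpose_apply, mwPsiS, Pi.one_apply, one_apply, mwAdj, ite_mul,
    one_mul, zero_mul, Fintype.sum_prod_type, sum_ite_irrel, sum_ite_eq', mem_univ, ↓reduceIte,
    sum_const_zero, sum_ite_mem, univ_inter, mul_ite, mul_one, mul_zero, mwEdge, Matrix.sum_apply]
  exact Finset.sum_comm

theorem mwEdge_univ_right (W : Fin n → Fin n → Matrix (Fin k) (Fin k) ℝ)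
    (hsym : ∀ u v, W u v = W v u) (S : Finset (Fin n)) :
    mwEdge n k W S univ = mwVol n k W S :=
  Finset.sum_congr rfl fun s _ => Finset.sum_congr rfl fun t _ => hsym s t

theorem mwEdge_univ_left (W : Fin n → Fin n → Matrix (Fin k) (Fin k) ℝ) (T : Finset (Fin n)) :
    mwEdge n k W univ T = mwVol n k W T :=
  Finset.sum_comm

theorem transpose_mwVol (W : Fin n → Fin n → Matrix (Fin k) (Fin k) ℝ)
    (hD : ∀ v, (∑ u, W u v)ᵀ = ∑ u, W u v) (S : Finset (Fin n)) :
    (mwVol n k W S)ᵀ = mwVol n k W S := by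
  rw [mwVol, transpose_sum]
  exact Finset.sum_congr rfl fun v _ => hD v

end

theorem matrix_weighted_irregular_mixing_identity_general
    (n k : ℕ)
    (W : Fin n → Fin n → Matrix (Fin k) (Fin k) ℝ)
    (hsym : ∀ u v, W u v = W v u)
    (hDinv : IsUnit (mwDeg n k W).det)
    (Q : Fin n → Matrix (Fin k) (Fin k) ℝ)
    (hQpsd : ∀ v, (Q v).PosSemidef)
    (hQsq : ∀ v, Q v * Q v = ∑ u, W u v)
    (S T : Finset (Fin n)) :
    mwEdge n k W S T -
        mwVol n k W S * (mwVol n k W Finset.univ)⁻¹ * mwVol n k W T =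
      (mwPsiS n k Q S -
          mwPsi n k Q * (mwVol n k W Finset.univ)⁻¹ * mwVol n k W S)ᵀ *
        ((mwBlockDiag n k Q)⁻¹ * mwAdj n k W * (mwBlockDiag n k Q)⁻¹) *
        (mwPsiS n k Q T -
          mwPsi n k Q * (mwVol n k W Finset.univ)⁻¹ * mwVol n k W T) := by
  set B := mwBlockDiag n k Q
  set J : Finset (Fin n) → Matrix (Fin n × Fin k) (Fin k) ℝ := mwPsiS n k 1
  have hQsymm (v : Fin n) : (Q v)ᵀ = Q v := (hQpsd v).isHermitian
  have hBsymm : Bᵀ = B := by simp only [B, transpose_mwBlockDiag, hQsymm]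
  have hBdet : IsUnit B.det := by
    have hBB : B * B = mwDeg n k W := by
      rw [mwBlockDiag_mul_mwBlockDiag, mwDeg_eq_mwBlockDiag]; simp only [hQsq]
    exact isUnit_of_mul_isUnit_left (by rwa [← det_mul, hBB])
  have hperp (X : Finset (Fin n)) : mwPsiS n k Q X - mwPsi n k Q * (mwVol n k W univ)⁻¹ *
      mwVol n k W X = B * (J X - J univ * (mwVol n k W univ)⁻¹ * mwVol n k W X) := by
    simp only [B, J, mwPsi_eq_mwPsiS_univ, Matrix.mul_sub, ← Matrix.mul_assoc,
      mwBlockDiag_mul_mwPsiS, Pi.one_apply, Matrix.mul_one]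
  have hvol (X : Finset (Fin n)) : (mwVol n k W X)ᵀ = mwVol n k W X :=
    transpose_mwVol W (fun v => by rw [← hQsq v, transpose_mul, hQsymm]) X
  have hJ (X Y : Finset (Fin n)) : (J X)ᵀ * mwAdj n k W * J Y = mwEdge n k W X Y :=
    transpose_mwPsiS_one_mul_mwAdj_mul W X Y
  rw [hperp, hperp, transpose_mul_mul_mul_of_transpose_eq _ _ _ _ hBsymm hBdet,
    transpose_sub_mul_mul_sub _ _ _ _ _ _ _ (by rw [hJ, mwEdge_univ_right W hsym])
      (by rw [hJ, mwEdge_univ_left]) (by rw [hJ, mwEdge_univ_left]) (hvol S) (hvol univ), hJ]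

/-- Key identity in the proof of the irregular expander mixing lemma: with
`ψ` the block matrix of the square roots `D_v^{1/2}` (here `Q v`, characterized
by `Q v` PSD and `Q v * Q v = D_v`), `ψ_S^⊥ = ψ_S - ψ vol(V)⁻¹ vol(S)`, and
`Ã = D^{-1/2} A D^{-1/2}` the normalized adjacency matrix,
`E(S,T) - vol(S) vol(V)⁻¹ vol(T) = (ψ_S^⊥)ᵀ Ã ψ_T^⊥`. -/
theorem matrix_weighted_irregular_mixing_identity
    (n k : ℕ) (G : SimpleGraph (Fin n))
    (W : Fin n → Fin n → Matrix (Fin k) (Fin k) ℝ)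
    (hpsd : ∀ u v, (W u v).PosSemidef)
    (hsym : ∀ u v, W u v = W v u)
    (h0 : ∀ u v, ¬ G.Adj u v → W u v = 0)
    (hDinv : IsUnit (mwDeg n k W).det)
    (Q : Fin n → Matrix (Fin k) (Fin k) ℝ)
    (hQpsd : ∀ v, (Q v).PosSemidef)
    (hQsq : ∀ v, Q v * Q v = ∑ u, W u v)
    (S T : Finset (Fin n)) :
    mwEdge n k W S T -
        mwVol n k W S * (mwVol n k W Finset.univ)⁻¹ * mwVol n k W T =
      (mwPsiS n k Q S -
          mwPsi n k Q * (mwVol n k W Finset.univ)⁻¹ * mwVol n k W S)ᵀ *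
        ((mwBlockDiag n k Q)⁻¹ * mwAdj n k W * (mwBlockDiag n k Q)⁻¹) *
        (mwPsiS n k Q T -
          mwPsi n k Q * (mwVol n k W Finset.univ)⁻¹ * mwVol n k W T) :=
  matrix_weighted_irregular_mixing_identity_general n k W hsym hDinv Q hQpsd hQsq S T
end
end

section
/- (Cheeger-type lower bound, trace form.) Let (G,W) be a d-regular matrix-weighted graph with k×k weight matrices and d > 0, with Laplacian eigenvalues 0 = λ_1 = … = λ_k ≤ λ_{k+1} ≤ … ≤ λ_{nk}. Then for every vertex subset S with ∅ ≠ S ≠ V, the trace Cheeger ratio h^tr(S) = tr(E(S, V∖S)) / (d · min(|S|, |V∖S|)) satisfies h^tr(S) ≥ (1/(2d)) ∑_{i=1}^{k} λ_{k+i}; in particular the trace Cheeger constant h^tr_G = min_S h^tr(S) satisfies h^tr_G ≥ (1/(2d)) ∑_{i=1}^{k} λ_{k+i}. -/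
/-!
Write `K y` for the block column `y ⊗ I_k` and `x = χ_S - (|S|/n) 1`. The Laplacian
`L = D - A` annihilates `K 1` on both sides (on the right because `W` is symmetric), so
`tr (K xᵀ L K x) = tr (K χ_Sᵀ L K χ_S) = tr E(S, Sᶜ)`, while `|x|² = |S| |Sᶜ| / n` and `x ⊥ 1`.
The normalised block columns of `x` and `1` form a `kn × 2k` isometry `V` with
`tr (Vᵀ L V) = n / (|S| |Sᶜ|) · tr E(S, Sᶜ)`, and Ky Fan's minimum principle bounds this below by
`λ_1 + ⋯ + λ_{2k} = λ_{k+1} + ⋯ + λ_{2k}`. It remains to note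
`|S| |Sᶜ| / n ≥ min (|S|, |Sᶜ|) / 2`.
-/

open Matrix Finset

noncomputable section

theorem sum_range_le_sum_mul_of_monotoneOn {N r : ℕ} {lam : ℕ → ℝ}
    (hlam : MonotoneOn lam (Set.Iio N)) {t : Fin N → ℝ} (ht0 : ∀ i, 0 ≤ t i)
    (ht1 : ∀ i, t i ≤ 1) (hsum : ∑ i, t i = r) :
    ∑ i ∈ range r, lam i ≤ ∑ i : Fin N, lam i * t i := by
  have hrN : r ≤ N := by
    have : (r : ℝ) ≤ N := hsum ▸ (sum_le_sum fun i _ => ht1 i).trans (by simp)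
    exact_mod_cast this
  have hsel (f : ℕ → ℝ) :
      ∑ i : Fin N, (if (i : ℕ) < r then f i else 0) = ∑ i ∈ range r, f i := by
    rw [Fin.sum_univ_eq_sum_range (fun i => if i < r then f i else 0), ← sum_filter]
    congr 1
    ext i
    simp only [mem_filter, mem_range]
    omega
  set c : Fin N → ℝ := fun i => if (i : ℕ) < r then 1 else 0
  -- the pivot `lam (r - 1)` lies between the first `r` values and the rest
  -- (for `r = 0` truncated subtraction makes it `lam 0`, which still works)
  have hpivot (i : Fin N) : lam (r - 1) * (t i - c i) ≤ lam i * (t i - c i) := by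
    by_cases h : (i : ℕ) < r
    · have : lam i ≤ lam (r - 1) :=
        hlam (Set.mem_Iio.2 i.isLt) (Set.mem_Iio.2 (by omega)) (by omega)
      simp only [c, if_pos h]
      nlinarith [ht1 i]
    · have : lam (r - 1) ≤ lam i :=
        hlam (Set.mem_Iio.2 (by omega)) (Set.mem_Iio.2 i.isLt) (by omega)
      simp only [c, if_neg h]
      nlinarith [ht0 i]
  have hc : ∑ i, c i = r := by simpa [c] using hsel fun _ => 1
  have hlamc : ∑ i : Fin N, lam i * c i = ∑ i ∈ range r, lam i := by
    rw [← hsel]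
    simp [c]
  have := sum_le_sum fun i (_ : i ∈ univ) => hpivot i
  rw [← mul_sum, sum_sub_distrib, hsum, hc, sub_self, mul_zero] at this
  simp only [mul_sub, sum_sub_distrib, hlamc] at this
  linarith

namespace Matrix

variable {ι κ : Type*} [Fintype ι] [Fintype κ] [DecidableEq κ]

theorem mul_transpose_apply_self_mem_Icc {M : Matrix ι κ ℝ} (hM : Mᵀ * M = 1) (i : ι) :
    (M * Mᵀ) i i ∈ Set.Icc 0 1 := by
  set P := M * Mᵀ
  have hPP : P * P = P := by
    simp only [P, Matrix.mul_assoc]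
    rw [← Matrix.mul_assoc Mᵀ, hM, Matrix.one_mul]
  have hPt : Pᵀ = P := by simp [P, transpose_mul]
  have hnonneg : 0 ≤ P i i := by
    simp only [P, mul_apply, transpose_apply]
    exact sum_nonneg fun j _ => mul_self_nonneg _
  have hsq : P i i ^ 2 ≤ P i i := by
    calc P i i ^ 2 ≤ ∑ j, P i j ^ 2 :=
          single_le_sum (f := fun j => P i j ^ 2) (fun j _ => sq_nonneg _) (mem_univ i)
      _ = P i i := by
          conv_rhs => rw [← hPP, mul_apply]
          refine sum_congr rfl fun j _ => ?_
          rw [sq, ← transpose_apply P j i, hPt]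
  exact ⟨hnonneg, by nlinarith⟩

theorem trace_mul_transpose_of_transpose_mul_eq_one {M : Matrix ι κ ℝ} (hM : Mᵀ * M = 1) :
    trace (M * Mᵀ) = Fintype.card κ := by
  rw [trace_mul_comm, hM, trace_one]

omit [DecidableEq κ] in
theorem trace_transpose_mul_diagonal_mul [DecidableEq ι] (M : Matrix ι κ ℝ) (w : ι → ℝ) :
    trace (Mᵀ * diagonal w * M) = ∑ i, w i * (M * Mᵀ) i i := by
  rw [trace_mul_comm, ← Matrix.mul_assoc, trace]
  simp [mul_diagonal, mul_comm]

/-- Ky Fan's minimum principle. -/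
theorem sum_range_card_le_trace_transpose_mul_mul [DecidableEq ι] {N : ℕ} (e : ι ≃ Fin N)
    {lam : ℕ → ℝ} (hlam : MonotoneOn lam (Set.Iio N)) {U : Matrix ι ι ℝ} (hU : U * Uᵀ = 1)
    {V : Matrix ι κ ℝ} (hV : Vᵀ * V = 1) :
    ∑ i ∈ range (Fintype.card κ), lam i ≤
      trace (Vᵀ * (U * diagonal (fun p => lam (e p)) * Uᵀ) * V) := by
  set M := Uᵀ * V
  have hM : Mᵀ * M = 1 := by
    rw [transpose_mul, transpose_transpose, Matrix.mul_assoc, ← Matrix.mul_assoc U, hU,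
      Matrix.one_mul, hV]
  set t : Fin N → ℝ := fun i => (M * Mᵀ) (e.symm i) (e.symm i)
  have htr : trace (Vᵀ * (U * diagonal (fun p => lam (e p)) * Uᵀ) * V)
      = ∑ i : Fin N, lam i * t i := by
    rw [← e.sum_comp]
    simp only [t, e.symm_apply_apply]
    rw [← trace_transpose_mul_diagonal_mul]
    simp only [M, transpose_mul, transpose_transpose, Matrix.mul_assoc]
  have hsum : ∑ i, t i = Fintype.card κ := by
    rw [← trace_mul_transpose_of_transpose_mul_eq_one hM, trace]
    exact e.symm.sum_comp fun p => (M * Mᵀ) p p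
  rw [htr]
  exact sum_range_le_sum_mul_of_monotoneOn hlam
    (fun i => (mul_transpose_apply_self_mem_Icc hM _).1)
    (fun i => (mul_transpose_apply_self_mem_Icc hM _).2) hsum

end Matrix

/-- The block column `a ⊗ I_κ`. -/
def kronOne {V : Type*} (κ : Type*) [DecidableEq κ] (a : V → ℝ) : Matrix (V × κ) κ ℝ :=
  of fun p j => if p.2 = j then a p.1 else 0

section kronOne

variable {V κ : Type*} [DecidableEq κ]

@[simp]
theorem kronOne_sub (a b : V → ℝ) : kronOne κ (a - b) = kronOne κ a - kronOne κ b := by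
  ext p j
  by_cases h : p.2 = j <;> simp [kronOne, h]

@[simp]
theorem kronOne_smul (c : ℝ) (a : V → ℝ) : kronOne κ (c • a) = c • kronOne κ a := by
  ext p j
  by_cases h : p.2 = j <;> simp [kronOne, h]

variable [Fintype V] [Fintype κ]

theorem kronOne_transpose_mul_kronOne (a b : V → ℝ) :
    (kronOne κ a)ᵀ * kronOne κ b = (a ⬝ᵥ b) • (1 : Matrix κ κ ℝ) := by
  ext i j
  by_cases h : i = j
  · simp [kronOne, mul_apply, Fintype.sum_prod_type, dotProduct, h]
  · simp [kronOne, mul_apply, Fintype.sum_prod_type, h, Ne.symm h, one_apply]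

theorem transpose_fromCols_kronOne_mul_fromCols_kronOne {a b : V → ℝ} (ha : a ⬝ᵥ a = 1)
    (hb : b ⬝ᵥ b = 1) (hab : a ⬝ᵥ b = 0) :
    (fromCols (kronOne κ a) (kronOne κ b))ᵀ * fromCols (kronOne κ a) (kronOne κ b) = 1 := by
  rw [transpose_fromCols, fromRows_mul_fromCols, kronOne_transpose_mul_kronOne,
    kronOne_transpose_mul_kronOne, kronOne_transpose_mul_kronOne, kronOne_transpose_mul_kronOne,
    dotProduct_comm b a, ha, hb, hab]
  simp [fromBlocks_one]

end kronOne

theorem Matrix.trace_transpose_fromCols_mul_mul_fromCols {ι κ κ' : Type*} [Fintype ι]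
    [Fintype κ] [Fintype κ'] (L : Matrix ι ι ℝ) (A : Matrix ι κ ℝ) (B : Matrix ι κ' ℝ) :
    trace ((fromCols A B)ᵀ * L * fromCols A B) = trace (Aᵀ * L * A) + trace (Bᵀ * L * B) := by
  rw [transpose_fromCols, fromRows_mul, fromRows_mul_fromCols]
  simp [trace, Fintype.sum_sum_type]

section Laplacian

variable {n k : ℕ} (W : Fin n → Fin n → Matrix (Fin k) (Fin k) ℝ)

theorem kronOne_transpose_mul_mwLap_mul_kronOne (a b : Fin n → ℝ) :
    (kronOne (Fin k) a)ᵀ * mwLap n k W * kronOne (Fin k) b =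
      ∑ u, ∑ v, ((a v - a u) * b v) • W u v := by
  ext i j
  simp only [kronOne, mwLap, mul_apply, transpose_apply, of_apply, Matrix.sub_apply, mwDeg,
    Matrix.sum_apply, mwAdj, mul_sub, mul_ite, ite_mul, zero_mul, mul_zero, sum_sub_distrib,
    Fintype.sum_prod_type, sum_ite_irrel, sum_ite_eq', mem_univ, ↓reduceIte, sum_const_zero,
    sub_mul, Matrix.smul_apply, smul_eq_mul]
  simp only [Finset.mul_sum, Finset.sum_mul]
  congr 1 <;> rw [Finset.sum_comm] <;>
    exact sum_congr rfl fun _ _ => sum_congr rfl fun _ _ => by ring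

theorem kronOne_one_transpose_mul_mwLap_mul_kronOne (b : Fin n → ℝ) :
    (kronOne (Fin k) (1 : Fin n → ℝ))ᵀ * mwLap n k W * kronOne (Fin k) b = 0 := by
  simp [kronOne_transpose_mul_mwLap_mul_kronOne]

variable {W}

theorem kronOne_transpose_mul_mwLap_mul_kronOne_one (hsym : ∀ u v, W u v = W v u)
    (a : Fin n → ℝ) :
    (kronOne (Fin k) a)ᵀ * mwLap n k W * kronOne (Fin k) (1 : Fin n → ℝ) = 0 := by
  rw [kronOne_transpose_mul_mwLap_mul_kronOne]
  simp only [Pi.one_apply, mul_one, sub_smul, sum_sub_distrib]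
  rw [sub_eq_zero, sum_comm]
  exact sum_congr rfl fun u _ => sum_congr rfl fun v _ => by rw [hsym]

theorem kronOne_indicator_transpose_mul_mwLap_mul_kronOne_indicator
    (hsym : ∀ u v, W u v = W v u) (S : Finset (Fin n)) :
    (kronOne (Fin k) fun u => if u ∈ S then 1 else 0)ᵀ * mwLap n k W *
      kronOne (Fin k) (fun u => if u ∈ S then 1 else 0) = mwEdge n k W S Sᶜ := by
  have hterm (v u : Fin n) :
      (((if v ∈ S then 1 else 0) - (if u ∈ S then 1 else 0)) * (if v ∈ S then 1 else 0) : ℝ) •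
        W u v = if v ∈ S then (if u ∈ Sᶜ then W v u else 0) else 0 := by
    by_cases hv : v ∈ S <;> by_cases hu : u ∈ S <;> simp [hv, hu, hsym u v]
  rw [kronOne_transpose_mul_mwLap_mul_kronOne, sum_comm]
  simp only [hterm, sum_ite_irrel, sum_const_zero, sum_ite_mem, univ_inter, mwEdge]

end Laplacian

theorem dotProduct_inv_sqrt_smul_self {V : Type*} [Fintype V] {x : V → ℝ} (hx : 0 < x ⬝ᵥ x) :
    ((√(x ⬝ᵥ x))⁻¹ • x) ⬝ᵥ ((√(x ⬝ᵥ x))⁻¹ • x) = 1 := by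
  rw [smul_dotProduct, dotProduct_smul, smul_smul, smul_eq_mul, ← mul_inv,
    Real.mul_self_sqrt hx.le, inv_mul_cancel₀ hx.ne']

section cutVec

variable {V : Type*} [Fintype V] [DecidableEq V]

def cutVec (S : Finset V) : V → ℝ :=
  (fun u => if u ∈ S then 1 else 0) - ((#S : ℝ) / Fintype.card V) • 1

theorem cutVec_dotProduct_one (S : Finset V) : cutVec S ⬝ᵥ 1 = 0 := by
  simp only [dotProduct, cutVec, Pi.sub_apply, Pi.smul_apply, Pi.one_apply, smul_eq_mul, mul_one,
    sum_sub_distrib, sum_ite_mem, univ_inter, sum_const, nsmul_eq_mul, card_univ]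
  rcases (Fintype.card V).eq_zero_or_pos with hV | hV
  · simp [card_eq_zero.1 (Nat.le_zero.1 (hV ▸ card_le_univ S))]
  · rw [mul_div_cancel₀ _ (by positivity), sub_self]

theorem cutVec_dotProduct_self (S : Finset V) :
    cutVec S ⬝ᵥ cutVec S = #S * #Sᶜ / Fintype.card V := by
  have hV : (Fintype.card V : ℝ) = #S + #Sᶜ := by exact_mod_cast (card_add_card_compl S).symm
  simp only [dotProduct, cutVec, Pi.sub_apply, Pi.smul_apply, Pi.one_apply, smul_eq_mul, mul_one]
  set c := (#S : ℝ) / Fintype.card V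
  rw [← sum_add_sum_compl S,
    sum_congr rfl fun u (hu : u ∈ S) => show _ = (1 - c) * (1 - c) by rw [if_pos hu],
    sum_congr rfl fun u (hu : u ∈ Sᶜ) => show _ = (0 - c) * (0 - c) by
      rw [if_neg (mem_compl.1 hu)],
    sum_const, sum_const, nsmul_eq_mul, nsmul_eq_mul]
  simp only [c, hV]
  rcases (#S + #Sᶜ).eq_zero_or_pos with h | h
  · simp [Nat.add_eq_zero_iff.1 h]
  · have : (#S : ℝ) + #Sᶜ ≠ 0 := by exact_mod_cast h.ne'
    field_simp
    ring

end cutVec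

theorem kronOne_cutVec_transpose_mul_mwLap_mul_kronOne_cutVec {n k : ℕ}
    {W : Fin n → Fin n → Matrix (Fin k) (Fin k) ℝ} (hsym : ∀ u v, W u v = W v u)
    (S : Finset (Fin n)) :
    (kronOne (Fin k) (cutVec S))ᵀ * mwLap n k W * kronOne (Fin k) (cutVec S) =
      mwEdge n k W S Sᶜ := by
  simp only [cutVec, kronOne_sub, kronOne_smul, transpose_sub, transpose_smul, Matrix.sub_mul,
    Matrix.mul_sub, Matrix.smul_mul, Matrix.mul_smul,
    kronOne_indicator_transpose_mul_mwLap_mul_kronOne_indicator hsym,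
    kronOne_one_transpose_mul_mwLap_mul_kronOne, kronOne_transpose_mul_mwLap_mul_kronOne_one hsym,
    smul_zero, sub_zero]

theorem mul_sum_range_two_mul_le_trace_mwEdge {n k : ℕ}
    {W : Fin n → Fin n → Matrix (Fin k) (Fin k) ℝ} (hsym : ∀ u v, W u v = W v u)
    {lam : ℕ → ℝ} (hlam : MonotoneOn lam (Set.Iio (n * k)))
    {U : Matrix (Fin n × Fin k) (Fin n × Fin k) ℝ} (hU : U * Uᵀ = 1)
    (hLW : mwLap n k W = U * diagonal (fun p => lam (finProdFinEquiv p)) * Uᵀ)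
    {S : Finset (Fin n)} (hS : S.Nonempty) (hSc : Sᶜ.Nonempty) :
    (#S * #Sᶜ / n : ℝ) * ∑ i ∈ range (2 * k), lam i ≤ (mwEdge n k W S Sᶜ).trace := by
  have hn : 0 < n := Fin.pos_iff_nonempty.2 ⟨hS.choose⟩
  have hm : (0 : ℝ) < #S * #Sᶜ / n := by
    have := hS.card_pos
    have := hSc.card_pos
    positivity
  have hx : 0 < cutVec S ⬝ᵥ cutVec S := by rwa [cutVec_dotProduct_self, Fintype.card_fin]
  have h1 : (0 : ℝ) < (1 : Fin n → ℝ) ⬝ᵥ 1 := by simpa [dotProduct]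
  have hV := transpose_fromCols_kronOne_mul_fromCols_kronOne (κ := Fin k)
    (dotProduct_inv_sqrt_smul_self hx) (dotProduct_inv_sqrt_smul_self h1)
    (by simp [smul_dotProduct, dotProduct_smul, cutVec_dotProduct_one])
  have hKF := sum_range_card_le_trace_transpose_mul_mul finProdFinEquiv hlam hU hV
  rw [← hLW, trace_transpose_fromCols_mul_mul_fromCols] at hKF
  simp only [kronOne_smul, transpose_smul, Matrix.smul_mul, Matrix.mul_smul, smul_smul,
    kronOne_cutVec_transpose_mul_mwLap_mul_kronOne_cutVec hsym,
    kronOne_one_transpose_mul_mwLap_mul_kronOne, smul_zero, trace_smul, trace_zero, add_zero,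
    ← mul_inv, Real.mul_self_sqrt hm.le, Fintype.card_sum, Fintype.card_fin, ← two_mul,
    cutVec_dotProduct_self, smul_eq_mul] at hKF
  rwa [← le_inv_mul_iff₀ hm]

theorem sum_range_nonneg_of_monotoneOn {N k : ℕ} {lam : ℕ → ℝ}
    (hlam : MonotoneOn lam (Set.Iio N)) (hzero : ∀ i < k, lam i = 0) (hk : 2 * k ≤ N) :
    0 ≤ ∑ i ∈ range k, lam (k + i) := by
  refine sum_nonneg fun i hi => ?_
  have hik := mem_range.1 hi
  rw [← hzero i hik]
  exact hlam (Set.mem_Iio.2 (by omega)) (Set.mem_Iio.2 (by omega)) (by omega)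

theorem min_le_two_mul_mul_div_add {s t : ℝ} (hs : 0 ≤ s) (ht : 0 ≤ t) (hst : 0 < s + t) :
    min s t ≤ 2 * (s * t / (s + t)) := by
  rw [mul_div_assoc', le_div_iff₀ hst]
  rcases le_total s t with h | h
  · rw [min_eq_left h]; nlinarith
  · rw [min_eq_right h]; nlinarith

theorem matrix_weighted_cheeger_trace_lower_bound_general
    (n k : ℕ) (d : ℝ) (hd : 0 < d)
    (W : Fin n → Fin n → Matrix (Fin k) (Fin k) ℝ)
    (hsym : ∀ u v, W u v = W v u)
    (lam : ℕ → ℝ) (hlam : MonotoneOn lam (Set.Iio (n * k)))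
    (hzero : ∀ i < k, lam i = 0)
    (U : Matrix (Fin n × Fin k) (Fin n × Fin k) ℝ) (hU : U * Uᵀ = 1)
    (hLW : mwLap n k W =
      U * Matrix.diagonal (fun p => lam (finProdFinEquiv p)) * Uᵀ) :
    ∀ S : Finset (Fin n), S.Nonempty → S ≠ Finset.univ →
      (1 / (2 * d)) * (∑ i ∈ Finset.range k, lam (k + i)) ≤
        (mwEdge n k W S Sᶜ).trace / (d * min (S.card : ℝ) (Sᶜ.card : ℝ)) := by
  intro S hS hSU
  have hSc : Sᶜ.Nonempty := by rwa [nonempty_iff_ne_empty, Ne, compl_eq_empty_iff]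
  have hS₀ : (0 : ℝ) < #S := by exact_mod_cast hS.card_pos
  have hSc₀ : (0 : ℝ) < #Sᶜ := by exact_mod_cast hSc.card_pos
  have hcard : (#S + #Sᶜ : ℝ) = n := by
    exact_mod_cast (card_add_card_compl S).trans (Fintype.card_fin n)
  have hbound := mul_sum_range_two_mul_le_trace_mwEdge hsym hlam hU hLW hS hSc
  rw [two_mul, sum_range_add, sum_eq_zero fun i hi => hzero i (mem_range.1 hi), zero_add]
    at hbound
  have hgap := sum_range_nonneg_of_monotoneOn hlam hzero <| Nat.mul_le_mul_right k <| by
    have := (card_add_card_compl S).trans (Fintype.card_fin n)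
    have := hS.card_pos
    have := hSc.card_pos
    omega
  have hmin := min_le_two_mul_mul_div_add hS₀.le hSc₀.le (add_pos hS₀ hSc₀)
  rw [hcard] at hmin
  rw [le_div_iff₀ (mul_pos hd (lt_min hS₀ hSc₀))]
  calc 1 / (2 * d) * (∑ i ∈ range k, lam (k + i)) * (d * min (#S : ℝ) #Sᶜ)
      = min (#S : ℝ) #Sᶜ / 2 * ∑ i ∈ range k, lam (k + i) := by field_simp
    _ ≤ #S * #Sᶜ / n * ∑ i ∈ range k, lam (k + i) :=
        mul_le_mul_of_nonneg_right (by linarith) hgap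
    _ ≤ (mwEdge n k W S Sᶜ).trace := hbound

/-- Cheeger-type lower bound, trace form: for a `d`-regular matrix-weighted graph
(`d > 0`) and every vertex subset `S` with `∅ ≠ S ≠ V`, the trace Cheeger ratio
`h^tr(S) = tr E(S, V∖S) / (d min(|S|, |V∖S|))` satisfies
`h^tr(S) ≥ (1/(2d)) ∑_{i=1}^k λ_{k+i}`; in particular the trace Cheeger constant
`h^tr_G = min_S h^tr(S)` satisfies the same bound.  Here `lam` enumerates the
Laplacian eigenvalues in increasing order (0-indexed), with
`λ_1 = ⋯ = λ_k = 0`, witnessed by an orthogonal spectral decomposition. -/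
theorem matrix_weighted_cheeger_trace_lower_bound
    (n k : ℕ) (d : ℝ) (hd : 0 < d) (G : SimpleGraph (Fin n))
    (W : Fin n → Fin n → Matrix (Fin k) (Fin k) ℝ)
    (hpsd : ∀ u v, (W u v).PosSemidef)
    (hsym : ∀ u v, W u v = W v u)
    (h0 : ∀ u v, ¬ G.Adj u v → W u v = 0)
    (hreg : ∀ v : Fin n, ∑ u, W u v = d • (1 : Matrix (Fin k) (Fin k) ℝ))
    (lam : ℕ → ℝ) (hlam : MonotoneOn lam (Set.Iio (n * k)))
    (hzero : ∀ i < k, lam i = 0)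
    (U : Matrix (Fin n × Fin k) (Fin n × Fin k) ℝ) (hU : U * Uᵀ = 1)
    (hLW : mwLap n k W =
      U * Matrix.diagonal (fun p => lam (finProdFinEquiv p)) * Uᵀ) :
    ∀ S : Finset (Fin n), S.Nonempty → S ≠ Finset.univ →
      (1 / (2 * d)) * (∑ i ∈ Finset.range k, lam (k + i)) ≤
        (mwEdge n k W S Sᶜ).trace / (d * min (S.card : ℝ) (Sᶜ.card : ℝ)) :=
  matrix_weighted_cheeger_trace_lower_bound_general n k d hd W hsym lam hlam hzero U hU hLW
end
end
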